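/- arXiv:1103.4259 — 7 statements merged into one kernel-verified Lean document; each statement's English description precedes it below -/
import Mathlib

section
/- Let p_k = (n, D_k, F_k), 1 ≤ k ≤ m, be conditions in ℙ that are pairwise isomorphic (via order-preserving bijections of the D_k fixing the common part) and such that (D_k)_{1≤k≤m} forms a Δ-system with root D. Then p = (n, D₁ ∪ ⋯ ∪ D_m, F₁ ∪ ⋯ ∪ F_m) is a condition in ℙ and p ≤ p_k for every 1 ≤ k ≤ m. -/
open Ordinal Cardinal

/-- A condition in the forcing `ℙ`: `n ∈ ω`, `D` a finite subset of `ω₁`, and `F` a finite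
set of (graphs of) partial functions from `{0,…,n-1}` to `D`, containing all singletons. -/
structure PCond where
  n : ℕ
  D : Finset Ordinal
  F : Finset (Finset (ℕ × Ordinal))
  hD : ∀ ξ ∈ D, ξ < (Cardinal.aleph 1).ord
  hdom : ∀ f ∈ F, ∀ x ∈ f, x.1 < n ∧ x.2 ∈ D
  hfun : ∀ f ∈ F, ∀ x ∈ f, ∀ y ∈ f, x.1 = y.1 → x.2 = y.2
  hsing : ∀ i < n, ∀ ξ ∈ D, ({(i, ξ)} : Finset (ℕ × Ordinal)) ∈ F

/-- The ordering on `ℙ`: `p ≤ q` iff `n_p ≥ n_q`, `D_p ⊇ D_q`, `F_p ⊇ F_q`, and every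
`f ∈ F_p` has some `g ∈ F_q` with `graph(f) ∩ (n_q × D_q) ⊆ graph(g)`. -/
def PLe (p q : PCond) : Prop :=
  q.n ≤ p.n ∧ q.D ⊆ p.D ∧ q.F ⊆ p.F ∧
    ∀ f ∈ p.F, ∃ g ∈ q.F, ∀ x ∈ f, x.1 < q.n → x.2 ∈ q.D → x ∈ g

/-- `p₁` and `p₂` are isomorphic conditions: same `n`, and an order-preserving bijection
`e : D₁ → D₂` fixing `D₁ ∩ D₂` pointwise, with `f ∈ F₁ ↔ e[f] ∈ F₂`. -/
def PIso (p₁ p₂ : PCond) : Prop :=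
  p₁.n = p₂.n ∧ ∃ e : Ordinal → Ordinal,
    Set.BijOn e ↑p₁.D ↑p₂.D ∧
    (∀ ξ ∈ p₁.D, ∀ η ∈ p₁.D, (ξ ≤ η ↔ e ξ ≤ e η)) ∧
    (∀ ξ ∈ p₁.D ∩ p₂.D, e ξ = ξ) ∧
    (∀ f : Finset (ℕ × Ordinal), (∀ x ∈ f, x.2 ∈ p₁.D) →
      (f ∈ p₁.F ↔ f.image (fun x => (x.1, e x.2)) ∈ p₂.F))

noncomputable def PCond.iUnion {ι : Type*} [Fintype ι] (n : ℕ) (p : ι → PCond)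
    (hn : ∀ k, (p k).n = n) : PCond where
  n := n
  D := Finset.univ.biUnion fun k => (p k).D
  F := Finset.univ.biUnion fun k => (p k).F
  hD ξ hξ := by
    obtain ⟨k, -, hk⟩ := Finset.mem_biUnion.1 hξ
    exact (p k).hD ξ hk
  hdom f hf x hx := by
    obtain ⟨k, -, hk⟩ := Finset.mem_biUnion.1 hf
    obtain ⟨hx₁, hx₂⟩ := (p k).hdom f hk x hx
    exact ⟨hn k ▸ hx₁, Finset.mem_biUnion.2 ⟨k, Finset.mem_univ k, hx₂⟩⟩
  hfun f hf := by
    obtain ⟨k, -, hk⟩ := Finset.mem_biUnion.1 hf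
    exact (p k).hfun f hk
  hsing i hi ξ hξ := by
    obtain ⟨k, -, hk⟩ := Finset.mem_biUnion.1 hξ
    exact Finset.mem_biUnion.2 ⟨k, Finset.mem_univ k, (p k).hsing i ((hn k).symm ▸ hi) ξ hk⟩

/-- The witness is the image of `f` under the isomorphism, which fixes `p.D ∩ q.D`. -/
theorem PIso.exists_mem_F_of_mem_F {p q : PCond} (h : PIso p q) {f : Finset (ℕ × Ordinal)}
    (hf : f ∈ p.F) : ∃ g ∈ q.F, ∀ x ∈ f, x.2 ∈ q.D → x ∈ g := by
  obtain ⟨-, e, -, -, hfix, hF⟩ := h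
  have hfD : ∀ x ∈ f, x.2 ∈ p.D := fun x hx => (p.hdom f hf x hx).2
  refine ⟨f.image fun x => (x.1, e x.2), (hF f hfD).1 hf, fun x hx hxq => ?_⟩
  refine Finset.mem_image.2 ⟨x, hx, ?_⟩
  rw [hfix x.2 (Finset.mem_inter.2 ⟨hfD x hx, hxq⟩)]

theorem PLe_of_forall_mem_F_of_PIso {P q : PCond} (hn : q.n ≤ P.n) (hD : q.D ⊆ P.D)
    (hF : q.F ⊆ P.F) (hiso : ∀ f ∈ P.F, ∃ p : PCond, PIso p q ∧ f ∈ p.F) : PLe P q := by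
  refine ⟨hn, hD, hF, fun f hf => ?_⟩
  obtain ⟨p, hpq, hfp⟩ := hiso f hf
  obtain ⟨g, hg, hfg⟩ := hpq.exists_mem_F_of_mem_F hfp
  exact ⟨g, hg, fun x hx _ hxD => hfg x hx hxD⟩

theorem PCond.iUnion_le {ι : Type*} [Fintype ι] (n : ℕ) (p : ι → PCond)
    (hn : ∀ k, (p k).n = n) (hiso : ∀ k k', PIso (p k) (p k')) (k : ι) :
    PLe (PCond.iUnion n p hn) (p k) := by
  refine PLe_of_forall_mem_F_of_PIso (hn k).le
    (Finset.subset_biUnion_of_mem (fun k => (p k).D) (Finset.mem_univ k))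
    (Finset.subset_biUnion_of_mem (fun k => (p k).F) (Finset.mem_univ k)) fun f hf => ?_
  obtain ⟨j, -, hj⟩ := Finset.mem_biUnion.1 hf
  exact ⟨p j, hiso j k, hj⟩

theorem stmt_7_general (m : ℕ) (n : ℕ) (p : Fin m → PCond)
    (hn : ∀ k, (p k).n = n)
    (hiso : ∀ k k', PIso (p k) (p k')) :
    ∃ P : PCond, P.n = n ∧
      P.D = Finset.univ.biUnion (fun k => (p k).D) ∧
      P.F = Finset.univ.biUnion (fun k => (p k).F) ∧
      ∀ k, PLe P (p k) :=
  ⟨PCond.iUnion n p hn, rfl, rfl, rfl, PCond.iUnion_le n p hn hiso⟩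

/-- Amalgamation: pairwise isomorphic conditions with the same `n` whose domains form a
Δ-system with root `D` have a common lower bound obtained by taking unions. -/
theorem stmt_7 (m : ℕ) (hm : 1 ≤ m) (n : ℕ) (p : Fin m → PCond)
    (hn : ∀ k, (p k).n = n)
    (hiso : ∀ k k', PIso (p k) (p k'))
    (D : Finset Ordinal)
    (hΔ : ∀ k k', k ≠ k' → (p k).D ∩ (p k').D = D) :
    ∃ P : PCond, P.n = n ∧
      P.D = Finset.univ.biUnion (fun k => (p k).D) ∧
      P.F = Finset.univ.biUnion (fun k => (p k).F) ∧
      ∀ k, PLe P (p k) :=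
  stmt_7_general m n p hn hiso
end

section
/- Let p_k = (n, D_k, F_k), 1 ≤ k ≤ m, be pairwise isomorphic conditions in ℙ such that (D_k) is a Δ-system with root D. Let ξ_k ∈ D_k ∖ D and let i_k < n be pairwise distinct indices. Then p = (n, D₁ ∪ ⋯ ∪ D_m, F₁ ∪ ⋯ ∪ F_m ∪ {f₀}), where f₀ = {(i₁,ξ₁),...,(i_m,ξ_m)}, is a condition in ℙ with p ≤ p_k for every 1 ≤ k ≤ m. -/
open Ordinal Cardinal

open Finset

/-! The union of the conditions `p_k` with `f₀` added is a condition because `f₀` is a function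
(the `i_k` are distinct). It extends each `p_k` because of two observations. A function of
`F_j` is carried by the isomorphism `p_j ≅ p_k` to a function of `F_k`, and since this
isomorphism fixes `D_j ∩ D_k` pointwise, the image contains the part of the function that
lives in `D_k`. The part of `f₀` that lives in `D_k` is the singleton `{(i_k, ξ_k)}`, since
`ξ_j ∉ D_k` for `j ≠ k` by the Δ-system property. -/

theorem Finset.eq_of_mem_sdiff_root {ι α : Type*} [DecidableEq α] {s : ι → Finset α}
    {r : Finset α} (hs : ∀ j k, j ≠ k → s j ∩ s k = r) {a : α} {j k : ι}
    (haj : a ∈ s j \ r) (hak : a ∈ s k) : j = k := by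
  by_contra hjk
  rw [mem_sdiff, ← hs j k hjk, mem_inter] at haj
  exact haj.2 ⟨haj.1, hak⟩

theorem PIso.exists_mem_forall_mem_of_mem {p q : PCond} (hpq : PIso p q)
    {f : Finset (ℕ × Ordinal)} (hf : f ∈ p.F) :
    ∃ g ∈ q.F, ∀ x ∈ f, x.2 ∈ q.D → x ∈ g := by
  obtain ⟨-, e, -, -, hfix, hF⟩ := hpq
  have hfD : ∀ x ∈ f, x.2 ∈ p.D := fun x hx => (p.hdom f hf x hx).2
  refine ⟨f.image fun x => (x.1, e x.2), (hF f hfD).mp hf, fun x hx hxq => ?_⟩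
  have hex : e x.2 = x.2 := hfix x.2 (mem_inter.mpr ⟨hfD x hx, hxq⟩)
  exact mem_image.mpr ⟨x, hx, by rw [hex]⟩

namespace PCond

variable {ι : Type*} [Fintype ι]

noncomputable def amalgam (p : ι → PCond) (n : ℕ) (hn : ∀ k, (p k).n = n)
    (f₀ : Finset (ℕ × Ordinal))
    (hf₀dom : ∀ x ∈ f₀, x.1 < n ∧ x.2 ∈ Finset.univ.biUnion fun k => (p k).D)
    (hf₀fun : ∀ x ∈ f₀, ∀ y ∈ f₀, x.1 = y.1 → x.2 = y.2) : PCond where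
  n := n
  D := Finset.univ.biUnion fun k => (p k).D
  F := insert f₀ (Finset.univ.biUnion fun k => (p k).F)
  hD ζ hζ := by
    obtain ⟨k, -, hk⟩ := mem_biUnion.mp hζ
    exact (p k).hD ζ hk
  hdom f hf x hx := by
    obtain rfl | hf := mem_insert.mp hf
    · exact hf₀dom x hx
    obtain ⟨k, -, hk⟩ := mem_biUnion.mp hf
    obtain ⟨hxn, hxD⟩ := (p k).hdom f hk x hx
    exact ⟨hn k ▸ hxn, mem_biUnion.mpr ⟨k, mem_univ k, hxD⟩⟩
  hfun f hf := by
    obtain rfl | hf := mem_insert.mp hf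
    · exact hf₀fun
    obtain ⟨k, -, hk⟩ := mem_biUnion.mp hf
    exact (p k).hfun f hk
  hsing j hj ζ hζ := by
    obtain ⟨k, -, hk⟩ := mem_biUnion.mp hζ
    exact mem_insert_of_mem (mem_biUnion.mpr ⟨k, mem_univ k, (p k).hsing j (hn k ▸ hj) ζ hk⟩)

theorem amalgam_le {p : ι → PCond} {n : ℕ} {hn : ∀ k, (p k).n = n}
    {f₀ : Finset (ℕ × Ordinal)} {hf₀dom hf₀fun} (k : ι)
    (hf₀ : ∃ g ∈ (p k).F, ∀ x ∈ f₀, x.2 ∈ (p k).D → x ∈ g)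
    (hF : ∀ j, ∀ f ∈ (p j).F, ∃ g ∈ (p k).F, ∀ x ∈ f, x.2 ∈ (p k).D → x ∈ g) :
    PLe (amalgam p n hn f₀ hf₀dom hf₀fun) (p k) := by
  refine ⟨(hn k).le, subset_biUnion_of_mem (fun k => (p k).D) (mem_univ k),
    (subset_biUnion_of_mem (fun k => (p k).F) (mem_univ k)).trans (subset_insert _ _),
    fun f hf => ?_⟩
  obtain rfl | hf := mem_insert.mp hf
  · obtain ⟨g, hg, hfg⟩ := hf₀
    exact ⟨g, hg, fun x hx _ => hfg x hx⟩
  obtain ⟨j, -, hj⟩ := mem_biUnion.mp hf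
  obtain ⟨g, hg, hfg⟩ := hF j f hj
  exact ⟨g, hg, fun x hx _ => hfg x hx⟩

end PCond

theorem stmt_8_general (m : ℕ) (n : ℕ) (p : Fin m → PCond)
    (hn : ∀ k, (p k).n = n)
    (hiso : ∀ k k', PIso (p k) (p k'))
    (D : Finset Ordinal)
    (hΔ : ∀ k k', k ≠ k' → (p k).D ∩ (p k').D = D)
    (ξ : Fin m → Ordinal) (hξ : ∀ k, ξ k ∈ (p k).D \ D)
    (i : Fin m → ℕ) (hi : ∀ k, i k < n) (hinj : Function.Injective i) :
    ∃ P : PCond, P.n = n ∧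
      P.D = Finset.univ.biUnion (fun k => (p k).D) ∧
      P.F = insert (Finset.univ.image (fun k => (i k, ξ k)))
        (Finset.univ.biUnion (fun k => (p k).F)) ∧
      ∀ k, PLe P (p k) := by
  have hf₀dom : ∀ x ∈ Finset.univ.image (fun k => (i k, ξ k)),
      x.1 < n ∧ x.2 ∈ Finset.univ.biUnion fun k => (p k).D := by
    simp only [mem_image, mem_univ, true_and, forall_exists_index, forall_apply_eq_imp_iff]
    exact fun k => ⟨hi k, mem_biUnion.mpr ⟨k, mem_univ k, (mem_sdiff.mp (hξ k)).1⟩⟩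
  have hf₀fun : ∀ x ∈ Finset.univ.image (fun k => (i k, ξ k)),
      ∀ y ∈ Finset.univ.image (fun k => (i k, ξ k)), x.1 = y.1 → x.2 = y.2 := by
    simp only [mem_image, mem_univ, true_and, forall_exists_index, forall_apply_eq_imp_iff]
    exact fun j k hjk => congrArg ξ (hinj hjk)
  refine ⟨PCond.amalgam p n hn _ hf₀dom hf₀fun, rfl, rfl, rfl, fun k => ?_⟩
  refine PCond.amalgam_le k ⟨{(i k, ξ k)}, ?_, ?_⟩
    fun j f hf => (hiso j k).exists_mem_forall_mem_of_mem hf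
  · exact (p k).hsing (i k) (hn k ▸ hi k) (ξ k) (mem_sdiff.mp (hξ k)).1
  · simp only [mem_image, mem_univ, true_and, forall_exists_index, forall_apply_eq_imp_iff]
    intro j hjk
    rw [Finset.eq_of_mem_sdiff_root hΔ (hξ j) hjk]
    exact mem_singleton_self _

/-- Strong amalgamation: under the hypotheses of the Δ-system amalgamation, adding the
function `f₀ = {(i₁,ξ₁),…,(i_m,ξ_m)}` (with `ξ_k ∈ D_k ∖ D` and distinct `i_k < n`) still
yields a condition below each `p_k`. -/
theorem stmt_8 (m : ℕ) (hm : 1 ≤ m) (n : ℕ) (p : Fin m → PCond)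
    (hn : ∀ k, (p k).n = n)
    (hiso : ∀ k k', PIso (p k) (p k'))
    (D : Finset Ordinal)
    (hΔ : ∀ k k', k ≠ k' → (p k).D ∩ (p k').D = D)
    (ξ : Fin m → Ordinal) (hξ : ∀ k, ξ k ∈ (p k).D \ D)
    (i : Fin m → ℕ) (hi : ∀ k, i k < n) (hinj : Function.Injective i) :
    ∃ P : PCond, P.n = n ∧
      P.D = Finset.univ.biUnion (fun k => (p k).D) ∧
      P.F = insert (Finset.univ.image (fun k => (i k, ξ k)))
        (Finset.univ.biUnion (fun k => (p k).F)) ∧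
      ∀ k, PLe P (p k) :=
  stmt_8_general m n p hn hiso D hΔ ξ hξ i hi hinj
end

section
/- The forcing notion ℚ is σ-closed: for every decreasing sequence (q_n)_{n∈ω} of conditions in ℚ (q_{n+1} ≤ q_n for all n), the pair q = (⋃_n D_{q_n}, ⋃_n F_{q_n}) is a condition in ℚ and q ≤ q_n for every n. -/
open Ordinal Cardinal

/-- A condition in the forcing `ℚ`: `D` a countable subset of `ω₂` and `F` a countable set
of (graphs of) partial functions from `ω` to `D`, containing all singletons. -/
structure QCond where
  D : Set Ordinal
  F : Set (Set (ℕ × Ordinal))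
  hDc : D.Countable
  hD : ∀ ξ ∈ D, ξ < (Cardinal.aleph 2).ord
  hFc : F.Countable
  hdom : ∀ f ∈ F, ∀ x ∈ f, x.2 ∈ D
  hfun : ∀ f ∈ F, ∀ x ∈ f, ∀ y ∈ f, x.1 = y.1 → x.2 = y.2
  hsing : ∀ i : ℕ, ∀ ξ ∈ D, ({(i, ξ)} : Set (ℕ × Ordinal)) ∈ F

/-- The ordering on `ℚ`: `p ≤ q` iff `D_p ⊇ D_q`, `F_p ⊇ F_q`, and every `f ∈ F_p` has some
`g ∈ F_q` with `graph(f) ∩ (ω × D_q) ⊆ graph(g)`. -/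
def QLe (p q : QCond) : Prop :=
  q.D ⊆ p.D ∧ q.F ⊆ p.F ∧
    ∀ f ∈ p.F, ∃ g ∈ q.F, ∀ x ∈ f, x.2 ∈ q.D → x ∈ g

/-- `q₁` and `q₂` are isomorphic conditions: an order-preserving bijection `e : D₁ → D₂`
fixing `D₁ ∩ D₂` pointwise, with `f ∈ F₁ ↔ e[f] ∈ F₂`. -/
def QIso (q₁ q₂ : QCond) : Prop :=
  ∃ e : Ordinal → Ordinal,
    Set.BijOn e q₁.D q₂.D ∧
    (∀ ξ ∈ q₁.D, ∀ η ∈ q₁.D, (ξ ≤ η ↔ e ξ ≤ e η)) ∧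
    (∀ ξ ∈ q₁.D ∩ q₂.D, e ξ = ξ) ∧
    (∀ f : Set (ℕ × Ordinal), (∀ x ∈ f, x.2 ∈ q₁.D) →
      (f ∈ q₁.F ↔ (fun x : ℕ × Ordinal => (x.1, e x.2)) '' f ∈ q₂.F))

lemma QLe.trans' {p r s : QCond} (h1 : QLe p r) (h2 : QLe r s) : QLe p s := by
  obtain ⟨hD1, hF1, hg1⟩ := h1
  obtain ⟨hD2, hF2, hg2⟩ := h2
  refine ⟨fun x hx => hD1 (hD2 hx), fun f hf => hF1 (hF2 hf), ?_⟩
  intro f hf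
  obtain ⟨g, hg, hgs⟩ := hg1 f hf
  obtain ⟨h, hh, hhs⟩ := hg2 g hg
  exact ⟨h, hh, fun x hx hxD => hhs x (hgs x hx (hD2 hxD)) hxD⟩

lemma QLe.refl' (p : QCond) : QLe p p :=
  ⟨subset_rfl, subset_rfl, fun f hf => ⟨f, hf, fun x hx _ => hx⟩⟩

lemma qle_of_le (q : ℕ → QCond) (hdec : ∀ n, QLe (q (n + 1)) (q n)) {m n : ℕ}
    (h : n ≤ m) : QLe (q m) (q n) := by
  induction m with
  | zero => simp only [Nat.le_zero.1 h]; exact QLe.refl' _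
  | succ k ih =>
    rcases Nat.eq_or_lt_of_le h with h' | h'
    · rw [h']; exact QLe.refl' _
    · exact QLe.trans' (hdec k) (ih (by omega))

/-- `ℚ` is σ-closed: a decreasing sequence of conditions has the coordinatewise union as a
condition below every term. -/
theorem stmt_10 (q : ℕ → QCond) (hdec : ∀ n, QLe (q (n + 1)) (q n)) :
    ∃ Q : QCond, Q.D = ⋃ n, (q n).D ∧ Q.F = ⋃ n, (q n).F ∧ ∀ n, QLe Q (q n) := by
  refine ⟨⟨⋃ n, (q n).D, ⋃ n, (q n).F, Set.countable_iUnion fun n => (q n).hDc,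
    ?_, Set.countable_iUnion fun n => (q n).hFc, ?_, ?_, ?_⟩, rfl, rfl, ?_⟩
  · rintro ξ hξ
    obtain ⟨n, hn⟩ := Set.mem_iUnion.1 hξ
    exact (q n).hD ξ hn
  · rintro f hf x hx
    obtain ⟨n, hn⟩ := Set.mem_iUnion.1 hf
    exact Set.mem_iUnion.2 ⟨n, (q n).hdom f hn x hx⟩
  · rintro f hf x hx y hy hxy
    obtain ⟨n, hn⟩ := Set.mem_iUnion.1 hf
    exact (q n).hfun f hn x hx y hy hxy
  · intro i ξ hξ
    obtain ⟨n, hn⟩ := Set.mem_iUnion.1 hξ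
    exact Set.mem_iUnion.2 ⟨n, (q n).hsing i ξ hn⟩
  · intro n
    refine ⟨Set.subset_iUnion (fun k => (q k).D) n, Set.subset_iUnion (fun k => (q k).F) n, ?_⟩
    intro f hf
    obtain ⟨m, hm⟩ := Set.mem_iUnion.1 hf
    rcases le_or_gt n m with h | h
    · exact (qle_of_le q hdec h).2.2 f hm
    · refine ⟨f, (qle_of_le q hdec h.le).2.1 hm, fun x hx _ => hx⟩
end

section
/- Let q_k = (D_k, F_k), 1 ≤ k ≤ m, be pairwise isomorphic conditions in ℚ with (D_k) a Δ-system with countable root D. Given ξ_k ∈ D_k ∖ D and pairwise distinct i_k ∈ ω for 1 ≤ k ≤ m, the pair q = (D₁ ∪ ⋯ ∪ D_m, F₁ ∪ ⋯ ∪ F_m ∪ {f₀}), where f₀ = {(i₁,ξ₁),...,(i_m,ξ_m)}, is a condition in ℚ and q ≤ q_k for all 1 ≤ k ≤ m. -/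
/-!
The union of the `q k` with `f₀` adjoined is a condition because `f₀` is a function (the `i_k`
are distinct) with values in the union. To see that it extends `q k`, a member of `F_{k'}` is
carried into `F_k` by the isomorphism `q k' ≅ q k`, which fixes `D_{k'} ∩ D_k` and hence the
trace on `D_k`; and by the Δ-system property `ξ_{k'} ∉ D_k` for `k' ≠ k`, so the trace of `f₀`
on `D_k` is contained in the singleton `{(i_k, ξ_k)} ∈ F_k`.
-/

open Ordinal Cardinal

namespace QCond

def TraceCovered (q : QCond) (f : Set (ℕ × Ordinal)) : Prop :=
  ∃ g ∈ q.F, ∀ x ∈ f, x.2 ∈ q.D → x ∈ g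

theorem traceCovered_of_subset_singleton {q : QCond} {f : Set (ℕ × Ordinal)} {j : ℕ}
    {ζ : Ordinal} (hζ : ζ ∈ q.D) (hf : ∀ x ∈ f, x.2 ∈ q.D → x = (j, ζ)) :
    q.TraceCovered f :=
  ⟨{(j, ζ)}, q.hsing j ζ hζ, hf⟩

theorem _root_.QIso.traceCovered {p q : QCond} (h : QIso p q) {f : Set (ℕ × Ordinal)}
    (hf : f ∈ p.F) : q.TraceCovered f := by
  obtain ⟨e, -, -, hfix, hF⟩ := h
  refine ⟨(fun x : ℕ × Ordinal => (x.1, e x.2)) '' f, (hF f (p.hdom f hf)).mp hf, ?_⟩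
  intro x hx hxq
  exact ⟨x, hx, Prod.ext rfl (hfix x.2 ⟨p.hdom f hf x hx, hxq⟩)⟩

section Amalgam

variable {ι : Type*} [Countable ι] (q : ι → QCond) (f₀ : Set (ℕ × Ordinal))

def amalgam (hdom : ∀ x ∈ f₀, x.2 ∈ ⋃ k, (q k).D)
    (hfun : ∀ x ∈ f₀, ∀ y ∈ f₀, x.1 = y.1 → x.2 = y.2) : QCond where
  D := ⋃ k, (q k).D
  F := insert f₀ (⋃ k, (q k).F)
  hDc := Set.countable_iUnion fun k => (q k).hDc
  hD ζ hζ := by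
    obtain ⟨k, hk⟩ := Set.mem_iUnion.mp hζ
    exact (q k).hD ζ hk
  hFc := (Set.countable_iUnion fun k => (q k).hFc).insert f₀
  hdom f hf x hx := by
    obtain rfl | hf := Set.mem_insert_iff.mp hf
    · exact hdom x hx
    · obtain ⟨k, hk⟩ := Set.mem_iUnion.mp hf
      exact Set.mem_iUnion_of_mem k ((q k).hdom f hk x hx)
  hfun f hf := by
    obtain rfl | hf := Set.mem_insert_iff.mp hf
    · exact hfun
    · obtain ⟨k, hk⟩ := Set.mem_iUnion.mp hf
      exact (q k).hfun f hk
  hsing j ζ hζ := by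
    obtain ⟨k, hk⟩ := Set.mem_iUnion.mp hζ
    exact Set.mem_insert_of_mem f₀ (Set.mem_iUnion_of_mem k ((q k).hsing j ζ hk))

theorem amalgam_qLe (hdom : ∀ x ∈ f₀, x.2 ∈ ⋃ k, (q k).D)
    (hfun : ∀ x ∈ f₀, ∀ y ∈ f₀, x.1 = y.1 → x.2 = y.2) (k : ι)
    (h₀ : (q k).TraceCovered f₀) (hF : ∀ k', ∀ f ∈ (q k').F, (q k).TraceCovered f) :
    QLe (amalgam q f₀ hdom hfun) (q k) := by
  refine ⟨Set.subset_iUnion (fun k => (q k).D) k,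
    fun f hf => Set.mem_insert_of_mem f₀ (Set.mem_iUnion_of_mem k hf), fun f hf => ?_⟩
  obtain rfl | hf := Set.mem_insert_iff.mp hf
  · exact h₀
  · obtain ⟨k', hk'⟩ := Set.mem_iUnion.mp hf
    exact hF k' f hk'

end Amalgam

end QCond

theorem stmt_13_general (m : ℕ) (q : Fin m → QCond)
    (hiso : ∀ k k', QIso (q k) (q k'))
    (D : Set Ordinal)
    (hΔ : ∀ k k', k ≠ k' → (q k).D ∩ (q k').D = D)
    (ξ : Fin m → Ordinal) (hξ : ∀ k, ξ k ∈ (q k).D \ D)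
    (i : Fin m → ℕ) (hinj : Function.Injective i) :
    ∃ Q : QCond, Q.D = ⋃ k, (q k).D ∧
      Q.F = insert (Set.range (fun k => (i k, ξ k))) (⋃ k, (q k).F) ∧
      ∀ k, QLe Q (q k) := by
  have hξ_mem : ∀ k k', ξ k' ∈ (q k).D → k' = k := fun k k' hk' => by
    by_contra hne
    exact (hξ k').2 (hΔ k' k hne ▸ ⟨(hξ k').1, hk'⟩)
  have hdom : ∀ x ∈ Set.range (fun k => (i k, ξ k)), x.2 ∈ ⋃ k, (q k).D := by
    rintro _ ⟨k, rfl⟩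
    exact Set.mem_iUnion_of_mem k (hξ k).1
  have hfun : ∀ x ∈ Set.range (fun k => (i k, ξ k)), ∀ y ∈ Set.range (fun k => (i k, ξ k)),
      x.1 = y.1 → x.2 = y.2 := by
    rintro _ ⟨k, rfl⟩ _ ⟨k', rfl⟩ h
    rw [hinj h]
  refine ⟨QCond.amalgam q _ hdom hfun, rfl, rfl,
    fun k => QCond.amalgam_qLe q _ hdom hfun k ?_ fun k' _ => (hiso k' k).traceCovered⟩
  refine QCond.traceCovered_of_subset_singleton (j := i k) (hξ k).1 ?_
  rintro _ ⟨k', rfl⟩ hk'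
  rw [hξ_mem k k' hk']

/-- Strong amalgamation in `ℚ`: with `ξ_k ∈ D_k ∖ D` and pairwise distinct `i_k ∈ ω`,
adding `f₀ = {(i₁,ξ₁),…,(i_m,ξ_m)}` to the union still yields a common lower bound. -/
theorem stmt_13 (m : ℕ) (hm : 1 ≤ m) (q : Fin m → QCond)
    (hiso : ∀ k k', QIso (q k) (q k'))
    (D : Set Ordinal) (hDc : D.Countable)
    (hΔ : ∀ k k', k ≠ k' → (q k).D ∩ (q k').D = D)
    (ξ : Fin m → Ordinal) (hξ : ∀ k, ξ k ∈ (q k).D \ D)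
    (i : Fin m → ℕ) (hinj : Function.Injective i) :
    ∃ Q : QCond, Q.D = ⋃ k, (q k).D ∧
      Q.F = insert (Set.range (fun k => (i k, ξ k))) (⋃ k, (q k).F) ∧
      ∀ k, QLe Q (q k) :=
  stmt_13_general m q hiso D hΔ ξ hξ i hinj
end

section
/- If partial orders P and Q both have precaliber ω₁, then their product P × Q (with coordinatewise ordering) has precaliber ω₁. -/
/-- `P` has precaliber `ω₁`: every uncountable subset contains an uncountable subset in
which every finite subset has a common lower bound. -/
def PrecaliberOmega1 (P : Type*) [PartialOrder P] : Prop :=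
  ∀ S : Set P, ¬ S.Countable →
    ∃ T ⊆ S, ¬ T.Countable ∧ ∀ F : Finset P, ↑F ⊆ T → ∃ p : P, ∀ q ∈ F, p ≤ q

/-!
Shrink an uncountable `S ⊆ P × Q` twice: first to an uncountable subset whose first
coordinates form a centered set, then inside it to one whose second coordinates do as well.
For a single coordinate map `f`, either some fibre of `f` on `S` is uncountable (and its image
is a point), or `f '' S` is uncountable and precaliber `ω₁` yields an uncountable centered
`T ⊆ f '' S`, whose preimage in `S` is again uncountable. A product of centered sets is centered.
-/

open Set

namespace Set

variable {α β : Type*}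

theorem Countable.of_image_of_countable_fibers {f : α → β} {s : Set α}
    (himage : (f '' s).Countable) (hfibers : ∀ b, (s ∩ f ⁻¹' {b}).Countable) : s.Countable :=
  (himage.biUnion fun b _ => hfibers b).mono fun x hx =>
    mem_biUnion (mem_image_of_mem f hx) (show x ∈ s ∩ f ⁻¹' {f x} from ⟨hx, rfl⟩)

end Set

section Centered

variable {P Q : Type*} [Preorder P] [Preorder Q]

def IsCentered (A : Set P) : Prop :=
  ∀ F : Finset P, ↑F ⊆ A → ∃ p : P, ∀ q ∈ F, p ≤ q

theorem IsCentered.mono {A B : Set P} (hB : IsCentered B) (hAB : A ⊆ B) : IsCentered A :=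
  fun F hF => hB F (hF.trans hAB)

theorem isCentered_singleton (p : P) : IsCentered ({p} : Set P) :=
  fun _ hF => ⟨p, fun _ hq => (hF hq).symm.le⟩

theorem IsCentered.prod {A : Set P} {B : Set Q} (hA : IsCentered A) (hB : IsCentered B) :
    IsCentered (A ×ˢ B) := by
  classical
  intro F hF
  obtain ⟨p, hp⟩ := hA (F.image Prod.fst) <| by
    rw [Finset.coe_image]; exact (image_mono hF).trans (fst_image_prod_subset _ _)
  obtain ⟨q, hq⟩ := hB (F.image Prod.snd) <| by
    rw [Finset.coe_image]; exact (image_mono hF).trans (snd_image_prod_subset _ _)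
  exact ⟨(p, q), fun x hx =>
    ⟨hp _ (Finset.mem_image_of_mem _ hx), hq _ (Finset.mem_image_of_mem _ hx)⟩⟩

end Centered

theorem PrecaliberOmega1.exists_uncountable_subset_isCentered_image {α P : Type*}
    [PartialOrder P] (hP : PrecaliberOmega1 P) (f : α → P) {S : Set α} (hS : ¬ S.Countable) :
    ∃ S' ⊆ S, ¬ S'.Countable ∧ IsCentered (f '' S') := by
  by_cases hfiber : ∃ p, ¬ (S ∩ f ⁻¹' {p}).Countable
  · obtain ⟨p, hp⟩ := hfiber
    refine ⟨S ∩ f ⁻¹' {p}, inter_subset_left, hp, (isCentered_singleton p).mono ?_⟩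
    rintro _ ⟨x, hx, rfl⟩
    exact hx.2
  · push Not at hfiber
    obtain ⟨T, hTS, hT, hTc⟩ :=
      hP (f '' S) fun h => hS (h.of_image_of_countable_fibers hfiber)
    have himage : f '' (S ∩ f ⁻¹' T) = T := by
      rw [image_inter_preimage, inter_eq_right.2 hTS]
    refine ⟨S ∩ f ⁻¹' T, inter_subset_left, fun h => hT (himage ▸ h.image f), ?_⟩
    rw [himage]
    exact hTc

/-- The product of two posets with precaliber `ω₁` has precaliber `ω₁` (with the
coordinatewise ordering). -/
theorem stmt_15 (P Q : Type*) [PartialOrder P] [PartialOrder Q]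
    (hP : PrecaliberOmega1 P) (hQ : PrecaliberOmega1 Q) :
    PrecaliberOmega1 (P × Q) := by
  intro S hS
  obtain ⟨S₁, hS₁S, hS₁, hc₁⟩ :=
    hP.exists_uncountable_subset_isCentered_image Prod.fst hS
  obtain ⟨S₂, hS₂S₁, hS₂, hc₂⟩ :=
    hQ.exists_uncountable_subset_isCentered_image Prod.snd hS₁
  refine ⟨S₂, hS₂S₁.trans hS₁S, hS₂, ?_⟩
  exact (hc₁.prod hc₂).mono <|
    subset_fst_image_prod_snd_image.trans (prod_mono (image_mono hS₂S₁) le_rfl)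
end

section
/- Assume the Continuum Hypothesis. Then every family (A_α)_{α<ω₂} of countable sets contains a subfamily of cardinality ω₂ forming a Δ-system: there is a set B ⊆ ω₂ of cardinality ω₂ and a (countable) set R such that A_α ∩ A_β = R for all distinct α, β ∈ B. -/
/-!
Call `G` (with `#G ≤ ℵ₁`) a core of a subfamily `S` if for every `D` with `#D ≤ ℵ₁` more than
`ℵ₁` members of `S` meet `D` only inside `G`.

The whole family has a core: otherwise choose a witness `D G` for each small `G` and put
`G ν = ⋃ μ < ν, D (G μ)` for `ν < ω₁`. Each of the `ℵ₁` sets `{i | A i ∩ D (G ν) ⊆ G ν}` has at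
most `ℵ₁` members, so some index `i` lies in none of them, and choosing a point of
`A i ∩ D (G ν) \ G ν` for every `ν` gives `ℵ₁` distinct points of the countable set `A i`.

Under CH a core `G` has only `ℵ₁` countable subsets, so for one of them, `R`, the members with
`A i ∩ G = R` still have `G` as a core. A maximal Δ-system with root `R` among them (Zorn) is then
larger than `ℵ₁`: a smaller one is extended by any member that meets the union of its sets only
inside `G`.
-/

open Cardinal Set

universe u v

namespace Cardinal

theorem mk_iUnion_le_aleph_one {ι : Type u} {α : Type v} {f : ι → Set α}
    (hι : #ι ≤ ℵ₁) (hf : ∀ i, #(f i) ≤ ℵ₁) : #(⋃ i, f i) ≤ ℵ₁ := by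
  rw [← lift_le_aleph_one.{v, u}]
  calc lift.{u} #(⋃ i, f i) ≤ lift.{v} #ι * ⨆ i, lift.{u} #(f i) := mk_iUnion_le_lift f
    _ ≤ ℵ₁ * ℵ₁ :=
      mul_le_mul' (lift_le_aleph_one.mpr hι) (ciSup_le' fun i => lift_le_aleph_one.mpr (hf i))
    _ = ℵ₁ := mul_eq_self (aleph0_le_aleph 1)

theorem mk_countable_subsets_le_aleph_one {α : Type u} (CH : (𝔠 : Cardinal.{u}) = ℵ₁)
    {s : Set α} (hs : #s ≤ ℵ₁) : #{t : Set α // t ⊆ s ∧ #t ≤ ℵ₀} ≤ ℵ₁ :=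
  calc _ ≤ max #s ℵ₀ ^ ℵ₀ := mk_bounded_subset_le s ℵ₀
    _ ≤ ℵ₁ ^ ℵ₀ := power_le_power_right (max_le hs (aleph0_le_aleph 1))
    _ = ℵ₁ := by rw [← CH, continuum_power_aleph0]

theorem continuum_eq_aleph_one_of_lift (CH : (𝔠 : Cardinal.{u}) = ℵ₁) :
    (𝔠 : Cardinal.{v}) = ℵ₁ := by
  rw [← lift_eq_aleph_one.{v, u}, lift_continuum]
  simpa using congrArg Cardinal.lift.{v} CH

theorem aleph_one_lt_iff_aleph_two_le {c : Cardinal} : ℵ₁ < c ↔ ℵ_ 2 ≤ c := by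
  rw [← Order.succ_le_iff, succ_aleph, one_add_one_eq_two]

end Cardinal

theorem exists_eq_iUnion_Iio {W X : Type*} [Preorder W] [WellFoundedLT W]
    (D : Set X → Set X) : ∃ G : W → Set X, ∀ ν, G ν = ⋃ μ : Iio ν, D (G μ) :=
  ⟨WellFoundedLT.fix fun ν IH => ⋃ μ : Iio ν, D (IH μ μ.2), WellFoundedLT.fix_eq _⟩

theorem Set.exists_pairwise_lt_mk_of_extend {ι : Type u} {r : ι → ι → Prop} {S : Set ι}
    (c : Cardinal.{u})
    (h : ∀ P ⊆ S, P.Pairwise r → #P ≤ c → ∃ i ∈ S, i ∉ P ∧ ∀ j ∈ P, r i j ∧ r j i) :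
    ∃ B ⊆ S, B.Pairwise r ∧ c < #B := by
  obtain ⟨B, ⟨hBS, hB⟩, hmax⟩ := zorn_subset {P | P ⊆ S ∧ P.Pairwise r} fun C hC hchain =>
    ⟨⋃₀ C, ⟨sUnion_subset fun P hP => (hC hP).1,
      (pairwise_sUnion hchain.directedOn).mpr fun P hP => (hC hP).2⟩, fun _ => subset_sUnion_of_mem⟩
  refine ⟨B, hBS, hB, lt_of_not_ge fun hle => ?_⟩
  obtain ⟨i, hiS, hiB, hi⟩ := h B hBS hB hle
  have hins : insert i B ⊆ S ∧ (insert i B).Pairwise r :=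
    ⟨insert_subset hiS hBS, pairwise_insert.mpr ⟨hB, fun j hj _ => hi j hj⟩⟩
  exact hiB (hmax hins (subset_insert i B) (mem_insert i B))

theorem Set.inter_eq_of_inter_subset {α : Type*} {s t G R : Set α} (hs : s ∩ G = R)
    (ht : t ∩ G = R) (h : s ∩ t ⊆ G) : s ∩ t = R :=
  calc s ∩ t = s ∩ t ∩ G := (inter_eq_left.mpr h).symm
    _ = s ∩ G ∩ (t ∩ G) := inter_inter_distrib_right s t G
    _ = R := by rw [hs, ht, inter_self]

section DeltaSystem

variable {ι : Type u} {α : Type v}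

def IsDeltaSystem (A : ι → Set α) (B : Set ι) (R : Set α) : Prop :=
  B.Pairwise fun i j => A i ∩ A j = R

def IsCore (A : ι → Set α) (S : Set ι) (G : Set α) : Prop :=
  ∀ D : Set α, #D ≤ ℵ₁ → ℵ₁ < #{i ∈ S | A i ∩ D ⊆ G}

variable {A : ι → Set α}

theorem exists_isCore_univ (hA : ∀ i, (A i).Countable) (hι : ℵ₁ < #ι) :
    ∃ G : Set α, #G ≤ ℵ₁ ∧ IsCore A Set.univ G := by
  by_contra! H
  simp only [IsCore, not_forall, not_lt, exists_prop] at H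
  choose! D hDsmall hD using H
  obtain ⟨G, hG⟩ := exists_eq_iUnion_Iio (W := (ℵ₁ : Cardinal.{v}).ord.ToType) D
  have hGsmall : ∀ ν, #(G ν) ≤ ℵ₁ := by
    intro ν
    induction ν using WellFoundedLT.induction with
    | _ ν IH =>
      rw [hG ν]
      exact mk_iUnion_le_aleph_one ((mk_set_le _).trans (mk_ord_toType _).le)
        fun μ => hDsmall _ (IH μ μ.2)
  have hcover : ∀ i, ∃ ν, A i ∩ D (G ν) ⊆ G ν := by
    intro i
    by_contra! hi
    choose x hxA hxG using fun ν => not_subset.mp (hi ν)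
    -- `x μ ∈ D (G μ) ⊆ G ν` for `μ < ν`, while `x ν ∉ G ν`
    have hx : Function.Injective fun ν => (⟨x ν, (hxA ν).1⟩ : A i) :=
      .of_lt_imp_ne fun μ ν h e => hxG ν <| by
        rw [← Subtype.mk.inj e, hG ν]
        exact mem_iUnion.mpr ⟨⟨μ, h⟩, (hxA μ).2⟩
    have := (mk_le_of_injective hx).trans (le_aleph0_iff_set_countable.mpr (hA i))
    rw [mk_ord_toType] at this
    exact aleph0_lt_aleph_one.not_ge this
  have hcard : #(Set.univ : Set ι) ≤ ℵ₁ := by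
    have hsub : Set.univ ⊆ ⋃ ν, {i ∈ Set.univ | A i ∩ D (G ν) ⊆ G ν} := fun i _ =>
      mem_iUnion.mpr ((hcover i).imp fun _ h => ⟨trivial, h⟩)
    exact (mk_le_mk_of_subset hsub).trans
      (mk_iUnion_le_aleph_one (mk_ord_toType _).le fun ν => hD _ (hGsmall ν))
  rw [mk_univ] at hcard
  exact hcard.not_gt hι

theorem IsCore.exists_root (CH : (𝔠 : Cardinal.{v}) = ℵ₁) (hA : ∀ i, (A i).Countable)
    {S : Set ι} {G : Set α} (hG : #G ≤ ℵ₁) (h : IsCore A S G) :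
    ∃ R : Set α, R.Countable ∧ IsCore A {i ∈ S | A i ∩ G = R} G := by
  by_contra! H
  have hD : ∀ R : {t : Set α // t ⊆ G ∧ #t ≤ ℵ₀}, ∃ D : Set α,
      #D ≤ ℵ₁ ∧ #{i ∈ {i ∈ S | A i ∩ G = R} | A i ∩ D ⊆ G} ≤ ℵ₁ := by
    intro R
    simpa only [IsCore, not_forall, not_lt, exists_prop] using
      H R (le_aleph0_iff_set_countable.mp R.2.2)
  choose D hDsmall hD using hD
  have hK := mk_countable_subsets_le_aleph_one CH hG
  refine (h (⋃ R, D R) (mk_iUnion_le_aleph_one hK hDsmall)).not_ge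
    ((mk_le_mk_of_subset ?_).trans (mk_iUnion_le_aleph_one hK hD))
  rintro i ⟨hiS, hi⟩
  have hR : A i ∩ G ⊆ G ∧ #(A i ∩ G : Set α) ≤ ℵ₀ :=
    ⟨inter_subset_right, le_aleph0_iff_set_countable.mpr ((hA i).mono inter_subset_left)⟩
  exact mem_iUnion.mpr ⟨⟨A i ∩ G, hR⟩, ⟨hiS, rfl⟩,
    (inter_subset_inter_right _ (subset_iUnion D _)).trans hi⟩

theorem IsCore.exists_isDeltaSystem (hA : ∀ i, (A i).Countable) {S : Set ι}
    {G R : Set α} (hS : ∀ i ∈ S, A i ∩ G = R) (h : IsCore A S G) :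
    ∃ B : Set ι, ℵ₁ < #B ∧ IsDeltaSystem A B R := by
  obtain ⟨B, -, hB, hcard⟩ := exists_pairwise_lt_mk_of_extend (r := fun i j => A i ∩ A j = R) ℵ₁
    fun P hPS _ hP => by
      have hD : #(⋃ j : P, A j) ≤ ℵ₁ := mk_iUnion_le_aleph_one hP fun j =>
        (le_aleph0_iff_set_countable.mpr (hA j)).trans (aleph0_le_aleph 1)
      obtain ⟨i, ⟨hiS, hi⟩, hiP⟩ := not_subset.mp fun hsub =>
        (h _ hD).not_ge ((mk_le_mk_of_subset hsub).trans hP)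
      refine ⟨i, hiS, hiP, fun j hj => ?_⟩
      have hij : A i ∩ A j ⊆ G :=
        (inter_subset_inter_right _ (subset_iUnion_of_subset ⟨j, hj⟩ subset_rfl)).trans hi
      exact ⟨inter_eq_of_inter_subset (hS i hiS) (hS j (hPS hj)) hij,
        inter_eq_of_inter_subset (hS j (hPS hj)) (hS i hiS) (inter_comm (A j) _ ▸ hij)⟩
  exact ⟨B, hcard, hB⟩

theorem exists_isDeltaSystem_of_aleph_one_lt_mk (CH : (𝔠 : Cardinal.{v}) = ℵ₁)
    (hA : ∀ i, (A i).Countable) (hι : ℵ₁ < #ι) :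
    ∃ B : Set ι, ℵ₁ < #B ∧ ∃ R : Set α, R.Countable ∧ IsDeltaSystem A B R := by
  obtain ⟨G, hG, hGcore⟩ := exists_isCore_univ hA hι
  obtain ⟨R, hR, hRcore⟩ := hGcore.exists_root CH hA hG
  obtain ⟨B, hB, hΔ⟩ := hRcore.exists_isDeltaSystem hA fun i hi => hi.2
  exact ⟨B, hB, R, hR, hΔ⟩

end DeltaSystem

/-- Under CH, every family of countable sets indexed by `ω₂` contains a subfamily of
cardinality `ω₂` forming a Δ-system with a (countable) root `R`. -/
theorem stmt_16 {α : Type*} (CH : Cardinal.continuum = Cardinal.aleph 1)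
    (A : {o : Ordinal // o < (Cardinal.aleph 2).ord} → Set α)
    (hA : ∀ o, (A o).Countable) :
    ∃ B : Set {o : Ordinal // o < (Cardinal.aleph 2).ord},
      Cardinal.mk B = Cardinal.aleph 2 ∧
      ∃ R : Set α, R.Countable ∧
        ∀ a ∈ B, ∀ b ∈ B, a ≠ b → A a ∩ A b = R := by
  have hI : #{o : Ordinal // o < (ℵ_ 2).ord} = ℵ_ 2 := (mk_Iio_ordinal _).trans (by simp)
  obtain ⟨B, hB, R, hR, hΔ⟩ := exists_isDeltaSystem_of_aleph_one_lt_mk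
    (continuum_eq_aleph_one_of_lift CH) hA (aleph_one_lt_iff_aleph_two_le.mpr hI.ge)
  exact ⟨B, le_antisymm (hI ▸ mk_set_le B) (aleph_one_lt_iff_aleph_two_le.mp hB), R, hR, hΔ⟩
end

section
/- Assume CH. Then the forcing ℚ satisfies the following strong ω₂-chain condition: for every family (q_α)_{α<ω₂} of conditions in ℚ, there is A ⊆ ω₂ of cardinality ω₂ such that every finitely many conditions q_{α₁},...,q_{α_m} with α₁ < ⋯ < α_m in A have a common lower bound in ℚ. In particular, ℚ has no antichain of cardinality ω₂. -/
open Ordinal Cardinal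

/-!
A Δ-system argument. Pressing down at a closure point of cofinality `ω₁` gives `β < ω₂` and `ω₂`
indices `α` whose domains `D_α` pairwise meet below `β`. The restriction of `F_α` to `ω × β` is a
countable set of countable subsets of a set of size `ℵ₁`, so by CH it takes only `ℵ₁` values and
`ω₂` of these indices share it. Any countable subfamily of them is then extended by its union: a
function of one condition, cut down to the domain of another, lives below `β`, where it agrees
with a function of the other condition.
-/

open Set Order

universe u v

theorem Cardinal.IsRegular.exists_closed_lt_ord_cof_eq {κ : Cardinal.{u}} (hκ : κ.IsRegular)
    (hκ₀ : κ ≠ ℵ₀) {o : Ordinal.{u}} (ho : IsSuccLimit o) (hoκ : o < κ.ord)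
    {G : Ordinal.{u} → Ordinal.{u}} (hG : ∀ x < κ.ord, G x < κ.ord) :
    ∃ γ < κ.ord, γ.cof = o.cof ∧ ∀ x < γ, G x < γ := by
  -- each `nfp h a` is closed under `G`; `deriv h` is normal and its value at the limit `o` is a
  -- supremum of such points
  set h : Ordinal.{u} → Ordinal.{u} := fun a => ⨆ x : Iio a, G x + 1
  have h_lt : ∀ a < κ.ord, h a < κ.ord := fun a ha =>
    lift_iSup_add_one_lt_of_lt_cof
      (by rwa [← lift_cof, hκ.cof_ord, mk_Iio_ordinal, lift_lift, lift_lt, ← lt_ord])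
      fun x => hG x (x.2.trans ha)
  have nfp_closed : ∀ a, ∀ x < nfp h a, G x < nfp h a := by
    intro a x hx
    obtain ⟨n, hn⟩ := lt_nfp_iff.1 hx
    calc G x < h (h^[n] a) := Ordinal.lt_iSup_add_one (fun y : Iio (h^[n] a) => G y) ⟨x, hn⟩
      _ = h^[n + 1] a := (Function.iterate_succ_apply' h n a).symm
      _ ≤ nfp h a := iterate_le_nfp h a _
  refine ⟨deriv h o, deriv_lt_ord hκ hκ₀ h_lt hoκ, cof_map_of_isNormal (isNormal_deriv h) ho,
    fun x hx => ?_⟩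
  have : Small.{u} {a // a < o} := Ordinal.small_Iio o
  rw [deriv_limit h ho, Ordinal.lt_iSup_iff] at hx
  obtain ⟨⟨a, ha⟩, hxa⟩ := hx
  calc G x < deriv h (succ a) := by
        rw [deriv_succ]
        exact nfp_closed _ x (hxa.trans ((lt_succ _).trans_le (le_nfp h _)))
    _ < deriv h o := deriv_strictMono h (ho.succ_lt ha)

theorem Ordinal.exists_lt_forall_lt_of_countable {c : Ordinal.{u}} (hc : ℵ₀ < c.cof)
    {T : Set Ordinal.{u}} (hT : T.Countable) (hTc : ∀ ξ ∈ T, ξ < c) :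
    ∃ b < c, ∀ ξ ∈ T, ξ < b := by
  have : Countable T := hT.to_subtype
  refine ⟨⨆ ξ : T, ξ.1 + 1, lift_iSup_add_one_lt_of_lt_cof ?_ fun ξ => hTc ξ ξ.2,
    fun ξ hξ => Ordinal.lt_iSup_add_one (fun ξ : T => ξ.1) ⟨ξ, hξ⟩⟩
  rw [← lift_cof]
  exact (lift_le_aleph0.2 (le_aleph0_iff_set_countable.2 hT)).trans_lt (aleph0_lt_lift.2 hc)

theorem Cardinal.continuum_eq_aleph_one_univ (CH : continuum.{u} = ℵ₁) :
    continuum.{v} = ℵ₁ := by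
  apply Cardinal.lift_injective.{max u v}
  have h := congrArg Cardinal.lift.{max u v} CH
  simp only [lift_continuum, lift_aleph, Ordinal.lift_one] at h ⊢
  exact h

theorem Cardinal.mk_countable_subsets_le_aleph_one_s17 (CH : continuum.{u} = ℵ₁) {α : Type u}
    {s : Set α} (hs : #s ≤ ℵ₁) : #{t : Set α // t ⊆ s ∧ #t ≤ ℵ₀} ≤ ℵ₁ :=
  calc #{t : Set α // t ⊆ s ∧ #t ≤ ℵ₀} ≤ max #s ℵ₀ ^ ℵ₀ := mk_bounded_subset_le s ℵ₀
    _ ≤ ℵ₁ ^ ℵ₀ := power_le_power_right (max_le hs (aleph0_le_aleph 1))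
    _ = ℵ₁ := by rw [← CH, continuum_power_aleph0]

theorem Cardinal.isRegular_aleph_two : (ℵ_ 2).IsRegular := by
  simpa [one_add_one_eq_two] using isRegular_aleph_add_one 1

theorem Cardinal.aleph_one_lt_aleph_two : ℵ₁ < ℵ_ 2 :=
  aleph_lt_aleph.2 (by norm_num)

theorem Ordinal.card_le_aleph_one_of_lt_ord_aleph_two {β : Ordinal.{u}} (hβ : β < (ℵ_ 2).ord) :
    β.card ≤ ℵ₁ := by
  rw [← lt_succ_iff, succ_aleph, one_add_one_eq_two, ← lt_ord]
  exact hβ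

theorem Cardinal.mk_subtype_lt_ord_aleph_two : #{o : Ordinal.{u} // o < (ℵ_ 2).ord} = ℵ_ 2 := by
  have h := Cardinal.mk_Iio_ordinal (ℵ_ 2).ord
  rwa [card_ord, lift_aleph, Ordinal.lift_ofNat] at h

theorem Ordinal.mk_snd_preimage_Iio_le_aleph_one {β : Ordinal.{u}} (hβ : β < (ℵ_ 2).ord) :
    #(Prod.snd ⁻¹' Iio β : Set (ℕ × Ordinal.{u})) ≤ ℵ₁ := by
  rw [← univ_prod, mk_congr (Equiv.Set.prod _ _), mk_prod, mk_univ, Cardinal.mk_Iio_ordinal,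
    mk_nat, lift_aleph0, Cardinal.lift_lift]
  have hβ₁ : Cardinal.lift.{u + 1} β.card ≤ ℵ₁ := by
    simpa using Cardinal.lift_le.{u + 1}.2 (card_le_aleph_one_of_lt_ord_aleph_two hβ)
  exact (mul_le_max _ _).trans (max_le (max_le (aleph0_le_aleph 1) hβ₁) (aleph0_le_aleph 1))

namespace QCond

theorem countable_of_mem_F {c : QCond} {f : Set (ℕ × Ordinal)} (hf : f ∈ c.F) : f.Countable :=
  (mapsTo_univ Prod.fst f).countable_of_injOn
    (fun x hx y hy hxy => Prod.ext hxy (c.hfun f hf x hx y hy hxy)) countable_univ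

def biUnion {ι : Type*} (q : ι → QCond) {s : Set ι} (hs : s.Countable) : QCond where
  D := ⋃ a ∈ s, (q a).D
  F := ⋃ a ∈ s, (q a).F
  hDc := hs.biUnion fun a _ => (q a).hDc
  hD ξ hξ := by
    obtain ⟨a, -, hξa⟩ := mem_iUnion₂.1 hξ
    exact (q a).hD ξ hξa
  hFc := hs.biUnion fun a _ => (q a).hFc
  hdom f hf x hx := by
    obtain ⟨a, ha, hfa⟩ := mem_iUnion₂.1 hf
    exact mem_biUnion ha ((q a).hdom f hfa x hx)
  hfun f hf := by
    obtain ⟨a, -, hfa⟩ := mem_iUnion₂.1 hf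
    exact (q a).hfun f hfa
  hsing i ξ hξ := by
    obtain ⟨a, ha, hξa⟩ := mem_iUnion₂.1 hξ
    exact mem_biUnion ha ((q a).hsing i ξ hξa)

def trace (c : QCond) (R : Set Ordinal) : Set (Set (ℕ × Ordinal)) :=
  (· ∩ Prod.snd ⁻¹' R) '' c.F

theorem trace_subset (c : QCond) (R : Set Ordinal) :
    c.trace R ⊆ {t | t ⊆ Prod.snd ⁻¹' R ∧ #t ≤ ℵ₀} := by
  rintro _ ⟨f, hf, rfl⟩
  exact ⟨inter_subset_right,
    le_aleph0_iff_set_countable.2 ((countable_of_mem_F hf).mono inter_subset_left)⟩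

theorem mk_trace_le (c : QCond) (R : Set Ordinal) : #(c.trace R) ≤ ℵ₀ :=
  le_aleph0_iff_set_countable.2 (c.hFc.image _)

theorem biUnion_le {ι : Type*} {q : ι → QCond} {s : Set ι} (hs : s.Countable) {R : Set Ordinal}
    (hD : ∀ a ∈ s, ∀ b ∈ s, a ≠ b → (q a).D ∩ (q b).D ⊆ R)
    (htr : ∀ a ∈ s, ∀ b ∈ s, (q a).trace R = (q b).trace R) {a : ι} (ha : a ∈ s) :
    QLe (biUnion q hs) (q a) := by
  refine ⟨subset_biUnion_of_mem (u := fun a => (q a).D) ha,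
    subset_biUnion_of_mem (u := fun a => (q a).F) ha, fun f hf => ?_⟩
  obtain ⟨b, hb, hfb⟩ := mem_iUnion₂.1 hf
  by_cases hab : a = b
  · subst hab
    exact ⟨f, hfb, fun x hx _ => hx⟩
  obtain ⟨g, hg, hgf⟩ : f ∩ Prod.snd ⁻¹' R ∈ (q a).trace R := htr a ha b hb ▸ ⟨f, hfb, rfl⟩
  refine ⟨g, hg, fun x hx hxa => ?_⟩
  have hxR : x.2 ∈ R := hD a ha b hb hab ⟨hxa, (q b).hdom f hfb x hx⟩
  exact (hgf.symm.subset ⟨hx, hxR⟩).1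

end QCond

def IsCenteredOn {ι : Type*} (q : ι → QCond) (A : Set ι) : Prop :=
  ∀ F : Finset ι, ↑F ⊆ A → ∃ r : QCond, ∀ a ∈ F, QLe r (q a)

theorem IsCenteredOn.comp {ι κ : Type*} {q : κ → QCond} {A : Set κ} (h : IsCenteredOn q A)
    (φ : ι → κ) : IsCenteredOn (q ∘ φ) (φ ⁻¹' A) := by
  classical
  intro F hF
  obtain ⟨r, hr⟩ := h (F.image φ) (by simpa [Set.subset_def] using hF)
  exact ⟨r, fun a ha => hr (φ a) (Finset.mem_image_of_mem φ ha)⟩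

section DeltaSystem

variable (q : {o : Ordinal.{0} // o < (ℵ_ 2).ord} → QCond)

def IsDeltaIndex (β : Ordinal.{0}) (α : {o : Ordinal.{0} // o < (ℵ_ 2).ord}) : Prop :=
  (∀ a < α, ∀ ξ ∈ (q a).D, ξ < α) ∧ ∀ ξ ∈ (q α).D, ξ < α → ξ < β

variable {q}

theorem IsDeltaIndex.inter_subset {β : Ordinal.{0}} {a b : {o : Ordinal.{0} // o < (ℵ_ 2).ord}}
    (ha : IsDeltaIndex q β a) (hb : IsDeltaIndex q β b) (hab : a ≠ b) :
    (q a).D ∩ (q b).D ⊆ Iio β := by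
  rintro ξ ⟨hξa, hξb⟩
  rcases hab.lt_or_gt with h | h
  · exact hb.2 ξ hξb (hb.1 a h ξ hξa)
  · exact ha.2 ξ hξa (ha.1 b h ξ hξb)

variable (q)

theorem exists_isCofinal_isDeltaIndex :
    ∃ β < (ℵ_ 2).ord, IsCofinal {α | IsDeltaIndex q β α} := by
  by_contra! H
  simp only [not_isCofinal_iff] at H
  choose B hB using H
  have hℵ₂ : ℵ₀ < (ℵ_ 2 : Cardinal.{0}).ord.cof := by
    rw [isRegular_aleph_two.cof_ord]
    exact aleph0_lt_aleph_one.trans aleph_one_lt_aleph_two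
  choose E hE_lt hE using fun a => Ordinal.exists_lt_forall_lt_of_countable hℵ₂ (q a).hDc
    (q a).hD
  set G : Ordinal.{0} → Ordinal.{0} := fun x =>
    if hx : x < (ℵ_ 2).ord then max (B x hx) (E ⟨x, hx⟩) else 0
  have hB_le : ∀ x (hx : x < (ℵ_ 2).ord), (B x hx : Ordinal) ≤ G x := fun x hx => by
    simp only [G, dif_pos hx]; exact le_max_left _ _
  have hE_le : ∀ a, E a ≤ G a := fun a => by
    simp only [G, dif_pos a.2]; exact le_max_right _ _
  obtain ⟨γ, hγ, hγcof, hγG⟩ := isRegular_aleph_two.exists_closed_lt_ord_cof_eq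
    (aleph0_lt_aleph_one.trans aleph_one_lt_aleph_two).ne' (isSuccLimit_ord (aleph0_le_aleph 1))
    (ord_lt_ord.2 aleph_one_lt_aleph_two) (G := G) fun x hx => by
      simp only [G, dif_pos hx]; exact max_lt (B x hx).2 (hE_lt _)
  -- `γ` is closed under `G` and has cofinality `ω₁`, so `D_γ ∩ γ` is bounded by some `b < γ`,
  -- making `γ` a `b`-index beyond the bound `B b < γ`.
  set γ' : {o : Ordinal.{0} // o < (ℵ_ 2).ord} := ⟨γ, hγ⟩
  obtain ⟨b, hbγ, hb⟩ := Ordinal.exists_lt_forall_lt_of_countable (c := γ)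
    (by rw [hγcof, isRegular_aleph_one.cof_ord]; exact aleph0_lt_aleph_one)
    ((q γ').hDc.mono inter_subset_left : {ξ ∈ (q γ').D | ξ < γ}.Countable) fun ξ hξ => hξ.2
  have hδ : IsDeltaIndex q b γ' :=
    ⟨fun a ha ξ hξ => ((hE a ξ hξ).trans_le (hE_le a)).trans (hγG a ha),
      fun ξ hξ hξγ => hb ξ ⟨hξ, hξγ⟩⟩
  exact (hB b (hbγ.trans hγ) γ' hδ).not_ge ((hB_le b _).trans (hγG b hbγ).le)

end DeltaSystem

theorem exists_isCenteredOn_lt_ord_aleph_two (CH : continuum.{1} = ℵ₁)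
    (q : {o : Ordinal.{0} // o < (ℵ_ 2).ord} → QCond) :
    ∃ A : Set {o : Ordinal.{0} // o < (ℵ_ 2).ord}, #A = ℵ_ 2 ∧ IsCenteredOn q A := by
  obtain ⟨β, hβ, hcof⟩ := exists_isCofinal_isDeltaIndex q
  have hB : ℵ_ 2 ≤ #{α | IsDeltaIndex q β α} := by
    have h := (Ordinal.cof_Iio _).symm.trans_le (Order.cof_le hcof)
    rwa [lift_ord, lift_aleph, Ordinal.lift_ofNat, isRegular_aleph_two.cof_ord] at h
  let Code := {S : Set (Set (ℕ × Ordinal.{0})) //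
    S ⊆ {t | t ⊆ Prod.snd ⁻¹' Iio β ∧ #t ≤ ℵ₀} ∧ #S ≤ ℵ₀}
  have hCode : #Code ≤ ℵ₁ := mk_countable_subsets_le_aleph_one_s17 CH
    (mk_countable_subsets_le_aleph_one_s17 CH (mk_snd_preimage_Iio_le_aleph_one hβ))
  obtain ⟨S, A, hAB, hA, hAS⟩ := infinite_pigeonhole_set
    (fun α : {α | IsDeltaIndex q β α} =>
      (⟨(q α).trace (Iio β), (q α).trace_subset _, (q α).mk_trace_le _⟩ : Code))
    (ℵ_ 2) hB (aleph0_le_aleph 2)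
    (by rw [isRegular_aleph_two.cof_ord]; exact hCode.trans_lt aleph_one_lt_aleph_two)
  refine ⟨A, le_antisymm ((mk_set_le A).trans mk_subtype_lt_ord_aleph_two.le) hA, fun F hF =>
    ⟨QCond.biUnion q F.countable_toSet, fun a ha => QCond.biUnion_le (R := Iio β) _ ?_ ?_ ha⟩⟩
  · exact fun a ha b hb hab => (hAB (hF ha)).inter_subset (hAB (hF hb)) hab
  · exact fun a ha b hb => congrArg Subtype.val ((hAS (hF ha)).trans (hAS (hF hb)).symm)

theorem exists_isCenteredOn (CH : continuum.{u} = ℵ₁) {ι : Type v} (hι : #ι = ℵ_ 2)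
    (q : ι → QCond) : ∃ A : Set ι, #A = ℵ_ 2 ∧ IsCenteredOn q A := by
  obtain ⟨e⟩ : Nonempty (ι ≃ {o : Ordinal.{0} // o < (ℵ_ 2).ord}) := by
    rw [← lift_mk_eq', hι, mk_subtype_lt_ord_aleph_two]
    simp
  obtain ⟨A, hA, hcent⟩ :=
    exists_isCenteredOn_lt_ord_aleph_two (continuum_eq_aleph_one_univ CH) (q ∘ e.symm)
  refine ⟨e ⁻¹' A, ?_, by simpa [Function.comp_def] using hcent.comp e⟩
  apply lift_injective.{1}
  rw [mk_preimage_equiv_lift, hA]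
  simp

/-- Under CH, `ℚ` satisfies a strong `ω₂`-chain condition: any `ω₂`-indexed family of
conditions has a subfamily of cardinality `ω₂` any finitely many members of which have a
common lower bound; in particular `ℚ` has no antichain of cardinality `ω₂`. -/
theorem stmt_17 (CH : Cardinal.continuum = Cardinal.aleph 1) :
    (∀ q : {o : Ordinal // o < (Cardinal.aleph 2).ord} → QCond,
      ∃ A : Set {o : Ordinal // o < (Cardinal.aleph 2).ord},
        Cardinal.mk A = Cardinal.aleph 2 ∧
        ∀ F : Finset {o : Ordinal // o < (Cardinal.aleph 2).ord}, ↑F ⊆ A →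
          ∃ r : QCond, ∀ a ∈ F, QLe r (q a)) ∧
    (¬ ∃ S : Set QCond, Cardinal.mk S = Cardinal.aleph 2 ∧
      ∀ a ∈ S, ∀ b ∈ S, a ≠ b → ¬ ∃ c : QCond, QLe c a ∧ QLe c b) := by
  refine ⟨fun q => exists_isCenteredOn CH mk_subtype_lt_ord_aleph_two q, ?_⟩
  rintro ⟨S, hS, hanti⟩
  obtain ⟨A, hA, hcent⟩ := exists_isCenteredOn CH hS Subtype.val
  obtain ⟨x, hx, y, hy, hxy⟩ : A.Nontrivial := by
    rw [← nontrivial_coe_sort, ← one_lt_iff_nontrivial, hA]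
    exact one_lt_aleph0.trans_le (aleph0_le_aleph 2)
  classical
  obtain ⟨r, hr⟩ := hcent {x, y} (by simp [insert_subset_iff, hx, hy])
  exact hanti x x.2 y y.2 (Subtype.coe_ne_coe.2 hxy) ⟨r, hr x (by simp), hr y (by simp)⟩
end
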